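/- arXiv:1905.00536 — 4 statements merged into one kernel-verified Lean document; each statement's English description precedes it below -/
import Mathlib

section
/- Let G = (V, E) be a finite, undirected, connected simple graph with positive edge weights, T ⊆ V, f a distortion function, and G̃ the metric closure of G over T. Let Ẽ' be a set of edges of G̃ such that for all u, v ∈ T the minimum total weight (with respect to the metric-closure weights) of a walk from u to v using only edges of Ẽ' is at most f(d_G(u, v)). For each edge {a, b} ∈ Ẽ' choose a minimum-weight a–b path P_{ab} in G, and let E' ⊆ E be the union of the edge sets of these paths. Then E' is a subsetwise f-spanner of G over T, and W(E') ≤ Σ_{{a,b} ∈ Ẽ'} d_G(a, b), i.e., the weight of E' is at most the weight of Ẽ' in the metric closure. -/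
open SimpleGraph Finset

variable {V : Type*}

/-- Total weight of a walk: sum of its edge weights. -/
def walkWeight (w : Sym2 V → ℝ) {G : SimpleGraph V} {u v : V} (p : G.Walk u v) : ℝ :=
  (p.edges.map w).sum

/-- Total weight of a finite edge set. -/
def setWeight (w : Sym2 V → ℝ) (E' : Finset (Sym2 V)) : ℝ :=
  ∑ e ∈ E', w e

/-- Shortest-walk distance in `G` between `u` and `v`. -/
noncomputable def graphDist (G : SimpleGraph V) (w : Sym2 V → ℝ) (u v : V) : ℝ :=
  sInf {c : ℝ | ∃ p : G.Walk u v, walkWeight w p = c}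

/-- `E'` is a subsetwise `f`-spanner of `G` over `T`:  `E' ⊆ E(G)` and for all terminals
`u, v ∈ T` there is a walk from `u` to `v` using only edges of `E'` of total weight at most
`f (d_G(u,v))` (equivalently, `d_{E'}(u,v) ≤ f (d_G(u,v))`). -/
def IsSpanner (G : SimpleGraph V) (w : Sym2 V → ℝ) (T : Set V) (f : ℝ → ℝ)
    (E' : Finset (Sym2 V)) : Prop :=
  ↑E' ⊆ G.edgeSet ∧
    ∀ u ∈ T, ∀ v ∈ T, ∃ p : G.Walk u v,
      (∀ e ∈ p.edges, e ∈ E') ∧ walkWeight w p ≤ f (graphDist G w u v)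

/-- A distortion function: `f(x) ≥ x` for all `x ≥ 0`. -/
def IsDistortion (f : ℝ → ℝ) : Prop := ∀ x : ℝ, 0 ≤ x → x ≤ f x

/-- Steiner tree weight: minimum weight of an edge set `E' ⊆ E(G)` connecting all of `T`. -/
noncomputable def steinerWeight (G : SimpleGraph V) (w : Sym2 V → ℝ) (T : Set V) : ℝ :=
  sInf {c : ℝ | ∃ E' : Finset (Sym2 V), ↑E' ⊆ G.edgeSet ∧
    (∀ u ∈ T, ∀ v ∈ T, ∃ p : G.Walk u v, ∀ e ∈ p.edges, e ∈ E') ∧ setWeight w E' = c}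

/-- Minimum weight of a subsetwise `f`-spanner of `G` over `T`. -/
noncomputable def optSpanner (G : SimpleGraph V) (w : Sym2 V → ℝ) (T : Set V) (f : ℝ → ℝ) : ℝ :=
  sInf {c : ℝ | ∃ E' : Finset (Sym2 V), IsSpanner G w T f E' ∧ setWeight w E' = c}

lemma graphDist_comm (G : SimpleGraph V) (w : Sym2 V → ℝ) (u v : V) :
    graphDist G w u v = graphDist G w v u := by
  unfold graphDist
  congr 1
  ext c
  constructor <;> rintro ⟨p, rfl⟩ <;>
    exact ⟨p.reverse, by simp [walkWeight, SimpleGraph.Walk.edges_reverse,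
      List.map_reverse, List.sum_reverse]⟩

/-- Weight function of the metric closure of `G` over `T`: the closure edge `{u,v}` has
weight `d_G(u,v)`. -/
noncomputable def cWeight (G : SimpleGraph V) (w : Sym2 V → ℝ) (T : Finset V) :
    Sym2 {x : V // x ∈ T} → ℝ :=
  Sym2.lift ⟨fun a b => graphDist G w (a : V) (b : V),
    fun a b => graphDist_comm G w (a : V) (b : V)⟩

lemma sum_union_le_real {α : Type*} [DecidableEq α] (s t : Finset α) (h : α → ℝ)
    (hs : ∀ a ∈ s, 0 ≤ h a) (ht : ∀ a ∈ t, 0 ≤ h a) :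
    ∑ a ∈ s ∪ t, h a ≤ ∑ a ∈ s, h a + ∑ a ∈ t, h a := by
  rw [← Finset.sum_union_inter]
  have : 0 ≤ ∑ a ∈ s ∩ t, h a :=
    Finset.sum_nonneg fun a ha => hs a (Finset.mem_inter.mp ha).1
  linarith

lemma sum_biUnion_le_real {ι α : Type*} [DecidableEq ι] [DecidableEq α]
    (s : Finset ι) (g : ι → Finset α) (h : α → ℝ)
    (hnn : ∀ i ∈ s, ∀ a ∈ g i, 0 ≤ h a) :
    ∑ a ∈ s.biUnion g, h a ≤ ∑ i ∈ s, ∑ a ∈ g i, h a := by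
  induction s using Finset.induction with
  | empty => simp
  | @insert x s' hx ih =>
    rw [Finset.biUnion_insert, Finset.sum_insert hx]
    refine le_trans (sum_union_le_real _ _ _ (hnn x (Finset.mem_insert_self x s'))
      ?_) ?_
    · intro a ha
      obtain ⟨i, hi, hai⟩ := Finset.mem_biUnion.mp ha
      exact hnn i (Finset.mem_insert_of_mem hi) a hai
    · have := ih (fun i hi a ha => hnn i (Finset.mem_insert_of_mem hi) a ha)
      linarith

/-- Let `Ẽ'` (here `Et`) be a set of edges of the metric closure `G̃` of `G`
over `T` such that for all `u, v ∈ T` there is a walk in `G̃` from `u` to `v` using only edges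
of `Ẽ'` of closure weight at most `f(d_G(u,v))`.  For each `{a,b} ∈ Ẽ'` choose a minimum-weight
`a`–`b` path in `G` with edge set `Pe {a,b}`, and let `E'` be the union of these edge sets.
Then `E'` is a subsetwise `f`-spanner of `G` over `T` and `W(E') ≤ Σ_{{a,b} ∈ Ẽ'} d_G(a,b)`. -/
theorem stmt4 {V : Type*} [Fintype V] [DecidableEq V] (G : SimpleGraph V) (w : Sym2 V → ℝ)
    (hG : G.Connected) (hw : ∀ e ∈ G.edgeSet, 0 < w e)
    (T : Finset V) (f : ℝ → ℝ) (hf : IsDistortion f)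
    (Et : Finset (Sym2 {x : V // x ∈ T})) (hEt : ∀ e ∈ Et, ¬ e.IsDiag)
    (hspan : ∀ u v : {x : V // x ∈ T},
      ∃ p : (⊤ : SimpleGraph {x : V // x ∈ T}).Walk u v,
        (∀ e ∈ p.edges, e ∈ Et) ∧
        (p.edges.map (cWeight G w T)).sum ≤ f (graphDist G w (u : V) (v : V)))
    (Pe : Sym2 {x : V // x ∈ T} → Finset (Sym2 V))
    (hPe : ∀ e ∈ Et, ∀ a b : {x : V // x ∈ T}, e = s(a, b) →
      ∃ p : G.Walk (a : V) (b : V), p.IsPath ∧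
        walkWeight w p = graphDist G w (a : V) (b : V) ∧ p.edges.toFinset = Pe e)
    (E' : Finset (Sym2 V)) (hE' : E' = Et.biUnion Pe) :
    IsSpanner G w ↑T f E' ∧ setWeight w E' ≤ ∑ e ∈ Et, cWeight G w T e := by
  -- key construction: from a walk in the closure using Et, build a walk in G using E'
  have hEsub : ↑E' ⊆ G.edgeSet := by
    intro e he
    rw [hE'] at he
    obtain ⟨e₀, he₀, hePe⟩ := Finset.mem_biUnion.mp (by exact_mod_cast he)
    induction e₀ with
    | _ a b =>
      obtain ⟨p, _, _, hpe⟩ := hPe _ he₀ a b rfl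
      rw [← hpe, List.mem_toFinset] at hePe
      exact p.edges_subset_edgeSet hePe
  have key : ∀ (a b : {x : V // x ∈ T}) (q : (⊤ : SimpleGraph {x : V // x ∈ T}).Walk a b),
      (∀ e ∈ q.edges, e ∈ Et) →
      ∃ p : G.Walk (a : V) (b : V), (∀ e ∈ p.edges, e ∈ E') ∧
        walkWeight w p = (q.edges.map (cWeight G w T)).sum := by
    intro a b q
    induction q with
    | nil => exact fun _ => ⟨SimpleGraph.Walk.nil, by simp [walkWeight]⟩
    | cons h q ih =>
      rename_i u c d
      intro hq
      have hmem : s(u, c) ∈ Et := hq _ (by simp)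
      obtain ⟨p₁, _, hp₁w, hp₁e⟩ := hPe _ hmem u c rfl
      obtain ⟨p₂, hp₂E, hp₂w⟩ := ih (fun e he => hq e (by simp [he]))
      refine ⟨p₁.append p₂, ?_, ?_⟩
      · intro e he
        rw [SimpleGraph.Walk.edges_append, List.mem_append] at he
        rcases he with he | he
        · rw [hE']
          exact Finset.mem_biUnion.mpr ⟨s(u, c), hmem, hp₁e ▸ List.mem_toFinset.mpr he⟩
        · exact hp₂E e he
      · simp only [walkWeight, SimpleGraph.Walk.edges_append, List.map_append,
          List.sum_append, SimpleGraph.Walk.edges_cons, List.map_cons, List.sum_cons]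
        rw [show (p₁.edges.map w).sum = walkWeight w p₁ from rfl,
          show (p₂.edges.map w).sum = walkWeight w p₂ from rfl, hp₁w, hp₂w]
        simp [cWeight]
  constructor
  · refine ⟨hEsub, ?_⟩
    intro u hu v hv
    obtain ⟨q, hq, hqw⟩ := hspan ⟨u, hu⟩ ⟨v, hv⟩
    obtain ⟨p, hpE, hpw⟩ := key ⟨u, hu⟩ ⟨v, hv⟩ q hq
    exact ⟨p, hpE, by rw [hpw]; exact hqw⟩
  · rw [hE']
    have h1 : setWeight w (Et.biUnion Pe) ≤ ∑ e ∈ Et, setWeight w (Pe e) := by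
      unfold setWeight
      refine sum_biUnion_le_real Et Pe w ?_
      intro i hi a ha
      induction i with
      | _ x y =>
        obtain ⟨p, _, _, hpe⟩ := hPe _ hi x y rfl
        rw [← hpe, List.mem_toFinset] at ha
        exact le_of_lt (hw a (p.edges_subset_edgeSet ha))
    refine h1.trans (Finset.sum_le_sum ?_)
    intro e he
    induction e with
    | _ x y =>
      obtain ⟨p, hp, hpw, hpe⟩ := hPe _ he x y rfl
      have : setWeight w (Pe s(x, y)) = walkWeight w p := by
        rw [← hpe]
        unfold setWeight walkWeight
        rw [Finset.sum_list_map_count]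
        refine Finset.sum_congr rfl fun a ha => ?_
        rw [List.count_eq_one_of_mem hp.edges_nodup (List.mem_toFinset.mp ha), one_smul]
      rw [this, hpw]
      simp [cWeight]
end

section
/- Let G = (V, E) be a finite, undirected, connected simple graph with positive edge weights, let T_ℓ ⊆ … ⊆ T_1 ⊆ V be nested terminal sets, t ≥ 1, and g : {1,…,ℓ} → ℝ nondecreasing with g(i) > 0. Let Q = {i_1 < i_2 < … < i_m} ⊆ {1,…,ℓ} with i_1 = 1 and i_m = ℓ, and let q : {1,…,ℓ} → Q be nondecreasing with q(i) ≥ i for all i and q(a) = a for all a ∈ Q. Suppose A, B > 0 satisfy g(q(i)) ≤ A·g(i) for all i ∈ {1,…,ℓ} and Σ_{j=1}^{k} g(i_j) ≤ B·g(i_k) for all k ∈ {1,…,m}. Let s ≥ 1, and for each k ∈ {1,…,m} let H_k ⊆ E be a subsetwise t-spanner of G over T̂_k := T_{min{ i : q(i) = i_k }} with W(H_k) ≤ s·OPT_t(G, T̂_k). Define E_i := ⋃_{k : i_k ≥ q(i)} H_k for i = 1,…,ℓ. Then E_ℓ ⊆ E_{ℓ−1} ⊆ … ⊆ E_1, each E_i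 is a subsetwise t-spanner of G over T_i, and the cost Σ_{e ∈ E_1} g(y(e))·w(e), where y(e) = max{ i : e ∈ E_i }, is at most A·B·s·OPT_ML. -/
open SimpleGraph Finset

variable {V : Type*}

/-- `E'` is a subsetwise multiplicative `t`-spanner of `G` over `T`. -/
def IsSpannerMul (G : SimpleGraph V) (w : Sym2 V → ℝ) (T : Set V) (t : ℝ)
    (E' : Finset (Sym2 V)) : Prop :=
  IsSpanner G w T (fun x => t * x) E'

/-- `OPT_t(G,T)`: minimum weight of a subsetwise multiplicative `t`-spanner. -/
noncomputable def optT (G : SimpleGraph V) (w : Sym2 V → ℝ) (t : ℝ) (T : Set V) : ℝ :=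
  sInf {c : ℝ | ∃ E' : Finset (Sym2 V), IsSpannerMul G w T t E' ∧ setWeight w E' = c}

/-- Cost of a multi-level solution `F` with level-cost function `g`:
`Σ_{e ∈ F 1} g(y(e))·w(e)` where `y(e) = max { i ∈ {1,…,ℓ} : e ∈ F i }`. -/
noncomputable def mlCost [DecidableEq V] (w : Sym2 V → ℝ) (g : ℕ → ℝ) (ℓ : ℕ)
    (F : ℕ → Finset (Sym2 V)) : ℝ :=
  ∑ e ∈ F 1, g (((Finset.Icc 1 ℓ).filter (fun i => e ∈ F i)).sup id) * w e

/-- `F` is a multi-level subsetwise `t`-spanner: a nested sequence `F ℓ ⊆ … ⊆ F 1 ⊆ E` where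
each `F i` is a subsetwise `t`-spanner of `G` over `T i`. -/
def IsMLSpanner (G : SimpleGraph V) (w : Sym2 V → ℝ) (t : ℝ) (ℓ : ℕ)
    (T : ℕ → Finset V) (F : ℕ → Finset (Sym2 V)) : Prop :=
  (∀ i ∈ Finset.Icc 1 ℓ, IsSpannerMul G w ↑(T i) t (F i)) ∧
  (∀ i ∈ Finset.Icc 1 ℓ, ∀ j ∈ Finset.Icc 1 ℓ, i ≤ j → F j ⊆ F i)

/-- `OPT_ML`: minimum cost of a multi-level subsetwise `t`-spanner. -/
noncomputable def optML [DecidableEq V] (G : SimpleGraph V) (w : Sym2 V → ℝ) (t : ℝ)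
    (g : ℕ → ℝ) (ℓ : ℕ) (T : ℕ → Finset V) : ℝ :=
  sInf {c : ℝ | ∃ F : ℕ → Finset (Sym2 V), IsMLSpanner G w t ℓ T F ∧ mlCost w g ℓ F = c}


lemma walkWeight_nonneg' {G : SimpleGraph V} (w : Sym2 V → ℝ)
    (hw : ∀ e ∈ G.edgeSet, 0 ≤ w e) {u v : V} (p : G.Walk u v) :
    0 ≤ walkWeight w p := by
  apply List.sum_nonneg
  intro x hx
  obtain ⟨e, he, rfl⟩ := List.mem_map.1 hx
  exact hw e (p.edges_subset_edgeSet he)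

lemma walkWeight_bypass_le' [DecidableEq V] {G : SimpleGraph V} (w : Sym2 V → ℝ)
    (hw : ∀ e ∈ G.edgeSet, 0 ≤ w e) {u v : V} (p : G.Walk u v) :
    walkWeight w p.bypass ≤ walkWeight w p := by
  obtain ⟨l, hperm, hsl⟩ := (p.bypass_isPath.edges_nodup).subperm p.edges_bypass_subset
  have h1 : walkWeight w p.bypass = (l.map w).sum := ((hperm.map w).sum_eq).symm
  rw [h1, walkWeight]
  refine List.Sublist.sum_le_sum (hsl.map w) ?_
  intro x hx
  obtain ⟨e, he, rfl⟩ := List.mem_map.1 hx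
  exact hw e (p.edges_subset_edgeSet he)

lemma graphDist_nonneg' {G : SimpleGraph V} (w : Sym2 V → ℝ)
    (hw : ∀ e ∈ G.edgeSet, 0 ≤ w e) (u v : V) : 0 ≤ graphDist G w u v := by
  apply Real.sInf_nonneg
  rintro c ⟨p, rfl⟩
  exact walkWeight_nonneg' w hw p

lemma exists_walk_eq_graphDist' [Fintype V] [DecidableEq V] {G : SimpleGraph V}
    (w : Sym2 V → ℝ) (hw : ∀ e ∈ G.edgeSet, 0 ≤ w e) (hG : G.Connected) (u v : V) :
    ∃ p : G.Walk u v, walkWeight w p = graphDist G w u v := by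
  haveI : DecidableRel G.Adj := Classical.decRel _
  obtain ⟨p0⟩ := hG.preconnected u v
  set S : Set ℝ := {c : ℝ | ∃ p : G.Walk u v, walkWeight w p = c} with hS
  set P : Set ℝ := Set.range (fun p : G.Path u v => walkWeight w p.1) with hP
  have hPS : P ⊆ S := by rintro c ⟨p, rfl⟩; exact ⟨p.1, rfl⟩
  have hPfin : P.Finite := Set.finite_range _
  have hPne : P.Nonempty := ⟨_, ⟨p0.toPath, rfl⟩⟩
  have hbd : ∀ c ∈ S, ∃ d ∈ P, d ≤ c := by
    rintro c ⟨p, rfl⟩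
    exact ⟨walkWeight w p.toPath.1, ⟨p.toPath, rfl⟩, walkWeight_bypass_le' w hw p⟩
  have hmem : sInf P ∈ P := hPne.csInf_mem hPfin
  have hSbdd : BddBelow S := by
    refine ⟨sInf P, fun c hc => ?_⟩
    obtain ⟨d, hd, hdc⟩ := hbd c hc
    exact (csInf_le hPfin.bddBelow hd).trans hdc
  have h1 : sInf S ≤ sInf P := csInf_le hSbdd (hPS hmem)
  have h2 : sInf P ≤ sInf S := by
    refine le_csInf ⟨_, ⟨p0, rfl⟩⟩ fun c hc => ?_
    obtain ⟨d, hd, hdc⟩ := hbd c hc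
    exact (csInf_le hPfin.bddBelow hd).trans hdc
  obtain ⟨pp, hpp⟩ := hmem
  have hgd : graphDist G w u v = sInf S := rfl
  exact ⟨pp.1, by rw [hgd, le_antisymm h1 h2]; exact hpp⟩

lemma exists_full_spanner' [Fintype V] [DecidableEq V] {G : SimpleGraph V}
    (w : Sym2 V → ℝ) (hw : ∀ e ∈ G.edgeSet, 0 ≤ w e) (hG : G.Connected)
    {t : ℝ} (ht : 1 ≤ t) :
    ∃ E0 : Finset (Sym2 V), ∀ T : Set V, IsSpannerMul G w T t E0 := by
  refine ⟨(Set.toFinite G.edgeSet).toFinset, fun T => ⟨?_, ?_⟩⟩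
  · intro e he
    exact (Set.Finite.mem_toFinset _).1 he
  · intro u _ v _
    obtain ⟨p, hp⟩ := exists_walk_eq_graphDist' w hw hG u v
    refine ⟨p, fun e he => (Set.Finite.mem_toFinset _).2 (p.edges_subset_edgeSet he), ?_⟩
    rw [hp]
    exact le_mul_of_one_le_left (graphDist_nonneg' w hw u v) ht

/-- general rounding-up theorem.  Let `g` be a nondecreasing positive
level-cost function, `Q = {i₁ = 1 < … < i_m = ℓ}` a rounding set, and `q` a nondecreasing
rounding function into `Q` with `q i ≥ i` and `q a = a` on `Q`.  Assume `A, B > 0` satisfy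
`g (q i) ≤ A·g i` and `Σ_{b ∈ Q, b ≤ a} g b ≤ B·g a`.  For each `a ∈ Q` let `H a` be an
`s`-approximate minimum subsetwise `t`-spanner over `T (τ a)` where
`τ a = min { i : q i = a }`, and set `Ee i = ⋃_{a ∈ Q, a ≥ q i} H a`.  Then `Ee` is a nested
multi-level subsetwise `t`-spanner and its cost is at most `A·B·s·OPT_ML`. -/
theorem stmt8 {V : Type*} [Fintype V] [DecidableEq V] (G : SimpleGraph V) (w : Sym2 V → ℝ)
    (hG : G.Connected) (hw : ∀ e ∈ G.edgeSet, 0 < w e)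
    (ℓ : ℕ) (hℓ : 1 ≤ ℓ) (T : ℕ → Finset V)
    (hT : ∀ i ∈ Finset.Icc 1 ℓ, ∀ j ∈ Finset.Icc 1 ℓ, i ≤ j → T j ⊆ T i)
    (t : ℝ) (ht : 1 ≤ t)
    (g : ℕ → ℝ) (hg0 : ∀ i ∈ Finset.Icc 1 ℓ, 0 < g i)
    (hgmono : ∀ i ∈ Finset.Icc 1 ℓ, ∀ j ∈ Finset.Icc 1 ℓ, i ≤ j → g i ≤ g j)
    (Q : Finset ℕ) (hQsub : Q ⊆ Finset.Icc 1 ℓ) (hQ1 : 1 ∈ Q) (hQℓ : ℓ ∈ Q)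
    (q : ℕ → ℕ) (hqQ : ∀ i ∈ Finset.Icc 1 ℓ, q i ∈ Q)
    (hqmono : ∀ i ∈ Finset.Icc 1 ℓ, ∀ j ∈ Finset.Icc 1 ℓ, i ≤ j → q i ≤ q j)
    (hqge : ∀ i ∈ Finset.Icc 1 ℓ, i ≤ q i) (hqfix : ∀ a ∈ Q, q a = a)
    (A B : ℝ) (hA0 : 0 < A) (hB0 : 0 < B)
    (hA : ∀ i ∈ Finset.Icc 1 ℓ, g (q i) ≤ A * g i)
    (hB : ∀ a ∈ Q, ∑ b ∈ Q.filter (fun b => b ≤ a), g b ≤ B * g a)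
    (s : ℝ) (hs : 1 ≤ s)
    (τ : ℕ → ℕ)
    (hτ : ∀ a ∈ Q, τ a ∈ Finset.Icc 1 ℓ ∧ q (τ a) = a ∧
      ∀ i ∈ Finset.Icc 1 ℓ, q i = a → τ a ≤ i)
    (H : ℕ → Finset (Sym2 V))
    (hH : ∀ a ∈ Q, IsSpannerMul G w ↑(T (τ a)) t (H a) ∧
      setWeight w (H a) ≤ s * optT G w t ↑(T (τ a)))
    (Ee : ℕ → Finset (Sym2 V))
    (hEe : ∀ i ∈ Finset.Icc 1 ℓ, Ee i = (Q.filter (fun a => q i ≤ a)).biUnion H) :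
    IsMLSpanner G w t ℓ T Ee ∧
    mlCost w g ℓ Ee ≤ A * B * s * optML G w t g ℓ T := by
  have h1I : (1 : ℕ) ∈ Finset.Icc 1 ℓ := Finset.mem_Icc.2 ⟨le_refl 1, hℓ⟩
  have hwnn : ∀ e ∈ G.edgeSet, 0 ≤ w e := fun e he => (hw e he).le
  have hτI : ∀ a ∈ Q, τ a ∈ Finset.Icc 1 ℓ := fun a ha => (hτ a ha).1
  have hHedge : ∀ a ∈ Q, ↑(H a) ⊆ G.edgeSet := fun a ha => ((hH a ha).1).1
  have hEedge : ∀ i ∈ Finset.Icc 1 ℓ, ↑(Ee i) ⊆ G.edgeSet := by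
    intro i hi e he
    have he' : e ∈ Ee i := he
    rw [hEe i hi] at he'
    obtain ⟨a, haf, hea⟩ := Finset.mem_biUnion.1 he'
    exact hHedge a (Finset.mem_filter.1 haf).1 (Finset.mem_coe.2 hea)
  have hml : IsMLSpanner G w t ℓ T Ee := by
    constructor
    · intro i hi
      have hqi : q i ∈ Q := hqQ i hi
      obtain ⟨hτIcc, hτfix, hτmin⟩ := hτ (q i) hqi
      have hτle : τ (q i) ≤ i := hτmin i hi rfl
      obtain ⟨⟨hsub, hspan⟩, _⟩ := hH (q i) hqi
      have hHsubE : H (q i) ⊆ Ee i := by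
        rw [hEe i hi]
        exact Finset.subset_biUnion_of_mem H (Finset.mem_filter.2 ⟨hqi, le_refl _⟩)
      refine ⟨hEedge i hi, ?_⟩
      intro u hu v hv
      have hu' : u ∈ (↑(T (τ (q i))) : Set V) :=
        Finset.mem_coe.2 (hT (τ (q i)) hτIcc i hi hτle (Finset.mem_coe.1 hu))
      have hv' : v ∈ (↑(T (τ (q i))) : Set V) :=
        Finset.mem_coe.2 (hT (τ (q i)) hτIcc i hi hτle (Finset.mem_coe.1 hv))
      obtain ⟨p, hpe, hpw⟩ := hspan u hu' v hv'
      exact ⟨p, fun e he => hHsubE (hpe e he), hpw⟩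
    · intro i hi j hj hij
      rw [hEe i hi, hEe j hj]
      intro e he
      obtain ⟨a, haf, hea⟩ := Finset.mem_biUnion.1 he
      obtain ⟨haQ, hqa⟩ := Finset.mem_filter.1 haf
      exact Finset.mem_biUnion.2
        ⟨a, Finset.mem_filter.2 ⟨haQ, le_trans (hqmono i hi j hj hij) hqa⟩, hea⟩
  refine ⟨hml, ?_⟩
  have hs0 : (0:ℝ) ≤ s := le_trans zero_le_one hs
  have hKpos : 0 < A * B * s := mul_pos (mul_pos hA0 hB0) (lt_of_lt_of_le one_pos hs)
  have key : ∀ c ∈ {c : ℝ | ∃ F : ℕ → Finset (Sym2 V),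
      IsMLSpanner G w t ℓ T F ∧ mlCost w g ℓ F = c},
      mlCost w g ℓ Ee ≤ A * B * s * c := by
    rintro c ⟨F, hF, rfl⟩
    have hHE1 : ∀ a ∈ Q, H a ⊆ Ee 1 := by
      intro a ha
      rw [hEe 1 h1I]
      refine Finset.subset_biUnion_of_mem H (Finset.mem_filter.2 ⟨ha, ?_⟩)
      rw [hqfix 1 hQ1]
      exact (Finset.mem_Icc.1 (hQsub ha)).1
    have stepA : mlCost w g ℓ Ee ≤ ∑ a ∈ Q, g a * setWeight w (H a) := by
      rw [mlCost]
      have hper : ∀ e ∈ Ee 1,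
          g (((Finset.Icc 1 ℓ).filter (fun i => e ∈ Ee i)).sup id) * w e
          ≤ ∑ a ∈ Q.filter (fun a => e ∈ H a), g a * w e := by
        intro e he
        have hwe : 0 ≤ w e := hwnn e (hEedge 1 h1I (Finset.mem_coe.2 he))
        obtain ⟨y, hy, hysup⟩ := Finset.exists_mem_eq_sup
          ((Finset.Icc 1 ℓ).filter (fun i => e ∈ Ee i))
          ⟨1, Finset.mem_filter.2 ⟨h1I, he⟩⟩ id
        rw [hysup]
        simp only [id_eq]
        obtain ⟨hyI, hye⟩ := Finset.mem_filter.1 hy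
        rw [hEe y hyI] at hye
        obtain ⟨a, haf, hea⟩ := Finset.mem_biUnion.1 hye
        obtain ⟨haQ, hqya⟩ := Finset.mem_filter.1 haf
        have haI := hQsub haQ
        have hga : g y ≤ g a := hgmono y hyI a haI (le_trans (hqge y hyI) hqya)
        have hsingle : g a * w e ≤ ∑ b ∈ Q.filter (fun b => e ∈ H b), g b * w e :=
          Finset.single_le_sum
            (fun b hb => mul_nonneg (hg0 b (hQsub (Finset.mem_filter.1 hb).1)).le hwe)
            (Finset.mem_filter.2 ⟨haQ, hea⟩)
        exact le_trans (mul_le_mul_of_nonneg_right hga hwe) hsingle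
      calc ∑ e ∈ Ee 1, g (((Finset.Icc 1 ℓ).filter (fun i => e ∈ Ee i)).sup id) * w e
          ≤ ∑ e ∈ Ee 1, ∑ a ∈ Q.filter (fun a => e ∈ H a), g a * w e :=
            Finset.sum_le_sum hper
        _ = ∑ e ∈ Ee 1, ∑ a ∈ Q, if e ∈ H a then g a * w e else 0 := by
            refine Finset.sum_congr rfl fun e _ => ?_
            rw [Finset.sum_filter]
        _ = ∑ a ∈ Q, ∑ e ∈ Ee 1, if e ∈ H a then g a * w e else 0 := Finset.sum_comm
        _ = ∑ a ∈ Q, g a * setWeight w (H a) := by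
            refine Finset.sum_congr rfl fun a ha => ?_
            rw [← Finset.sum_filter, Finset.filter_mem_eq_inter,
              Finset.inter_eq_right.2 (hHE1 a ha), setWeight, Finset.mul_sum]
    have hoptT : ∀ a ∈ Q, optT G w t ↑(T (τ a)) ≤ setWeight w (F (τ a)) := by
      intro a ha
      have hm : setWeight w (F (τ a)) ∈ {c : ℝ | ∃ E' : Finset (Sym2 V),
          IsSpannerMul G w ↑(T (τ a)) t E' ∧ setWeight w E' = c} :=
        ⟨F (τ a), hF.1 (τ a) (hτI a ha), rfl⟩
      refine csInf_le ⟨0, ?_⟩ hm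
      rintro d ⟨E', hE', rfl⟩
      exact Finset.sum_nonneg fun e he => hwnn e (hE'.1 (Finset.mem_coe.2 he))
    have stepB : ∑ a ∈ Q, g a * setWeight w (H a)
        ≤ s * ∑ a ∈ Q, g a * setWeight w (F (τ a)) := by
      rw [Finset.mul_sum]
      refine Finset.sum_le_sum fun a ha => ?_
      have hWa : setWeight w (H a) ≤ s * setWeight w (F (τ a)) :=
        le_trans (hH a ha).2 (mul_le_mul_of_nonneg_left (hoptT a ha) hs0)
      calc g a * setWeight w (H a) ≤ g a * (s * setWeight w (F (τ a))) :=
            mul_le_mul_of_nonneg_left hWa (hg0 a (hQsub ha)).le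
        _ = s * (g a * setWeight w (F (τ a))) := by ring
    have hFsub1 : ∀ a ∈ Q, F (τ a) ⊆ F 1 := fun a ha =>
      hF.2 1 h1I (τ a) (hτI a ha) (Finset.mem_Icc.1 (hτI a ha)).1
    have stepC : ∑ a ∈ Q, g a * setWeight w (F (τ a)) ≤ A * B * mlCost w g ℓ F := by
      have lhs_eq : ∑ a ∈ Q, g a * setWeight w (F (τ a))
          = ∑ e ∈ F 1, ∑ a ∈ Q.filter (fun a => e ∈ F (τ a)), g a * w e := by
        calc ∑ a ∈ Q, g a * setWeight w (F (τ a))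
            = ∑ a ∈ Q, ∑ e ∈ F 1, if e ∈ F (τ a) then g a * w e else 0 := by
              refine Finset.sum_congr rfl fun a ha => ?_
              rw [← Finset.sum_filter, Finset.filter_mem_eq_inter,
                Finset.inter_eq_right.2 (hFsub1 a ha), setWeight, Finset.mul_sum]
          _ = ∑ e ∈ F 1, ∑ a ∈ Q, if e ∈ F (τ a) then g a * w e else 0 := Finset.sum_comm
          _ = _ := by
              refine Finset.sum_congr rfl fun e _ => ?_
              rw [Finset.sum_filter]
      rw [lhs_eq, mlCost, Finset.mul_sum]
      refine Finset.sum_le_sum fun e he => ?_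
      have hwe : 0 ≤ w e := hwnn e ((hF.1 1 h1I).1 (Finset.mem_coe.2 he))
      obtain ⟨y, hy, hysup⟩ := Finset.exists_mem_eq_sup
        ((Finset.Icc 1 ℓ).filter (fun i => e ∈ F i))
        ⟨1, Finset.mem_filter.2 ⟨h1I, he⟩⟩ id
      rw [hysup]
      simp only [id_eq]
      have hyI : y ∈ Finset.Icc 1 ℓ := (Finset.mem_filter.1 hy).1
      have hsum : ∑ a ∈ Q.filter (fun a => e ∈ F (τ a)), g a ≤ A * B * g y := by
        have hsubset : Q.filter (fun a => e ∈ F (τ a)) ⊆ Q.filter (fun b => b ≤ q y) := by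
          intro a haf
          obtain ⟨haQ, hef⟩ := Finset.mem_filter.1 haf
          obtain ⟨hτaI, hτafix, _⟩ := hτ a haQ
          have hτay : τ a ≤ y := by
            have hmem : τ a ∈ (Finset.Icc 1 ℓ).filter (fun i => e ∈ F i) :=
              Finset.mem_filter.2 ⟨hτaI, hef⟩
            have := Finset.le_sup (f := id) hmem
            rw [hysup] at this
            exact this
          refine Finset.mem_filter.2 ⟨haQ, ?_⟩
          calc a = q (τ a) := hτafix.symm
            _ ≤ q y := hqmono (τ a) hτaI y hyI hτay
        calc ∑ a ∈ Q.filter (fun a => e ∈ F (τ a)), g a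
            ≤ ∑ b ∈ Q.filter (fun b => b ≤ q y), g b :=
              Finset.sum_le_sum_of_subset_of_nonneg hsubset
                (fun b hb _ => (hg0 b (hQsub (Finset.mem_filter.1 hb).1)).le)
          _ ≤ B * g (q y) := hB (q y) (hqQ y hyI)
          _ ≤ B * (A * g y) := mul_le_mul_of_nonneg_left (hA y hyI) hB0.le
          _ = A * B * g y := by ring
      calc ∑ a ∈ Q.filter (fun a => e ∈ F (τ a)), g a * w e
          = (∑ a ∈ Q.filter (fun a => e ∈ F (τ a)), g a) * w e := by rw [Finset.sum_mul]
        _ ≤ (A * B * g y) * w e := mul_le_mul_of_nonneg_right hsum hwe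
        _ = A * B * (g y * w e) := by ring
    calc mlCost w g ℓ Ee ≤ ∑ a ∈ Q, g a * setWeight w (H a) := stepA
      _ ≤ s * ∑ a ∈ Q, g a * setWeight w (F (τ a)) := stepB
      _ ≤ s * (A * B * mlCost w g ℓ F) := mul_le_mul_of_nonneg_left stepC hs0
      _ = A * B * s * mlCost w g ℓ F := by ring
  have hne : Set.Nonempty {c : ℝ | ∃ F : ℕ → Finset (Sym2 V),
      IsMLSpanner G w t ℓ T F ∧ mlCost w g ℓ F = c} := by
    obtain ⟨E0, hE0⟩ := exists_full_spanner' w hwnn hG ht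
    refine ⟨mlCost w g ℓ (fun _ => E0), fun _ => E0, ⟨?_, ?_⟩, rfl⟩
    · intro i _
      exact hE0 _
    · intro i _ j _ _
      exact subset_rfl
  have hfin : mlCost w g ℓ Ee / (A * B * s) ≤ optML G w t g ℓ T := by
    refine le_csInf hne fun c hc => ?_
    rw [div_le_iff₀ hKpos]
    calc mlCost w g ℓ Ee ≤ A * B * s * c := key c hc
      _ = c * (A * B * s) := by ring
  calc mlCost w g ℓ Ee = mlCost w g ℓ Ee / (A * B * s) * (A * B * s) := by
        field_simp
    _ ≤ optML G w t g ℓ T * (A * B * s) :=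
        mul_le_mul_of_nonneg_right hfin hKpos.le
    _ = A * B * s * optML G w t g ℓ T := by ring
end

section
/- Let G = (V, E) be a finite, undirected, connected simple graph with positive edge weights, let T_ℓ ⊆ … ⊆ T_1 ⊆ V be nested terminal sets, t ≥ 1, and g : {1,…,ℓ} → ℝ nondecreasing with g(i) > 0. Let Q = {i_1 < i_2 < … < i_m} ⊆ {1,…,ℓ} with i_1 = 1, and for each k ∈ {1,…,m} let H_k ⊆ E be a minimum-weight subsetwise t-spanner of G over T_{i_k}, with MIN_{i_k} := W(H_k) = OPT_t(G, T_{i_k}). Define E_i := ⋃_{k ≥ κ(i)} H_k for i = 1,…,ℓ, where κ(i) = max{ k : i_k ≤ i }. Then E_ℓ ⊆ … ⊆ E_1, each E_i is a subsetwise t-spanner of G over T_i, and the cost Σ_{e ∈ E_1} g(y(e))·w(e), where y(e) = max{ i : e ∈ E_i }, is at most Σ_{k=1}^{m} g(i_{k+1} − 1)·MIN_{i_k}, with the convention i_{m+1} = ℓ + 1. -/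
open SimpleGraph Finset

variable {V : Type*}

/-- Lemma on the merged solution over a rounding set `Q`.  Let
`Q = {i₁ = 1 < … < i_m} ⊆ {1,…,ℓ}`, let `succQ a` be the successor of `a` in `Q` (or `ℓ+1`
for the largest element), and for each `a ∈ Q` let `H a` be a minimum-weight subsetwise
`t`-spanner of `G` over `T a`.  Define `Ee i = ⋃_{a ∈ Q, a ≥ max{b ∈ Q : b ≤ i}} H a`.
Then `Ee` is a nested multi-level subsetwise `t`-spanner whose cost is at most
`Σ_{a ∈ Q} g(succQ a − 1) · OPT_t(G, T a)`. -/
theorem stmt9 {V : Type*} [Fintype V] [DecidableEq V] (G : SimpleGraph V) (w : Sym2 V → ℝ)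
    (hG : G.Connected) (hw : ∀ e ∈ G.edgeSet, 0 < w e)
    (ℓ : ℕ) (hℓ : 1 ≤ ℓ) (T : ℕ → Finset V)
    (hT : ∀ i ∈ Finset.Icc 1 ℓ, ∀ j ∈ Finset.Icc 1 ℓ, i ≤ j → T j ⊆ T i)
    (t : ℝ) (ht : 1 ≤ t)
    (g : ℕ → ℝ) (hg0 : ∀ i ∈ Finset.Icc 1 ℓ, 0 < g i)
    (hgmono : ∀ i ∈ Finset.Icc 1 ℓ, ∀ j ∈ Finset.Icc 1 ℓ, i ≤ j → g i ≤ g j)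
    (Q : Finset ℕ) (hQsub : Q ⊆ Finset.Icc 1 ℓ) (hQ1 : 1 ∈ Q)
    (succQ : ℕ → ℕ)
    (hsucc : ∀ a ∈ Q, a < succQ a ∧ succQ a ≤ ℓ + 1 ∧
      (∀ b ∈ Q, a < b → succQ a ≤ b) ∧ (succQ a = ℓ + 1 ∨ succQ a ∈ Q))
    (H : ℕ → Finset (Sym2 V))
    (hH : ∀ a ∈ Q, IsSpannerMul G w ↑(T a) t (H a) ∧
      setWeight w (H a) = optT G w t ↑(T a))
    (Ee : ℕ → Finset (Sym2 V))
    (hEe : ∀ i ∈ Finset.Icc 1 ℓ, Ee i =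
      (Q.filter (fun a => (Q.filter (fun b => b ≤ i)).sup id ≤ a)).biUnion H) :
    IsMLSpanner G w t ℓ T Ee ∧
    mlCost w g ℓ Ee ≤ ∑ a ∈ Q, g (succQ a - 1) * optT G w t ↑(T a) := by
  have hQmem : ∀ a ∈ Q, 1 ≤ a ∧ a ≤ ℓ := fun a ha => Finset.mem_Icc.mp (hQsub ha)
  set κ : ℕ → ℕ := fun i => (Q.filter (fun b => b ≤ i)).sup id with hκdef
  -- κ i ∈ Q and κ i ≤ i for i ≥ 1
  have hκ : ∀ i, 1 ≤ i → κ i ∈ Q ∧ κ i ≤ i := by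
    intro i hi
    have hne : (Q.filter (fun b => b ≤ i)).Nonempty :=
      ⟨1, Finset.mem_filter.mpr ⟨hQ1, hi⟩⟩
    obtain ⟨b, hb, hbe⟩ := Finset.exists_mem_eq_sup _ hne id
    obtain ⟨hbQ, hbi⟩ := Finset.mem_filter.mp hb
    constructor
    · show (Q.filter (fun b => b ≤ i)).sup id ∈ Q
      rw [hbe]; exact hbQ
    · show (Q.filter (fun b => b ≤ i)).sup id ≤ i
      rw [hbe]; exact hbi
  have hκmono : ∀ i j, i ≤ j → κ i ≤ κ j := by
    intro i j hij
    apply Finset.sup_mono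
    intro b hb
    obtain ⟨hbQ, hbi⟩ := Finset.mem_filter.mp hb
    exact Finset.mem_filter.mpr ⟨hbQ, le_trans hbi hij⟩
  have hκge : ∀ a ∈ Q, ∀ i, a ≤ i → a ≤ κ i := by
    intro a ha i hai
    exact Finset.le_sup (f := id) (Finset.mem_filter.mpr ⟨ha, hai⟩)
  -- membership in Ee i
  have hmem : ∀ i ∈ Finset.Icc 1 ℓ, ∀ e : Sym2 V,
      (e ∈ Ee i ↔ ∃ a ∈ Q, κ i ≤ a ∧ e ∈ H a) := by
    intro i hi e
    rw [hEe i hi, Finset.mem_biUnion]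
    constructor
    · rintro ⟨a, ha, hea⟩
      obtain ⟨haQ, hka⟩ := Finset.mem_filter.mp ha
      exact ⟨a, haQ, hka, hea⟩
    · rintro ⟨a, haQ, hka, hea⟩
      exact ⟨a, Finset.mem_filter.mpr ⟨haQ, hka⟩, hea⟩
  -- H a ⊆ edgeSet
  have hHsub : ∀ a ∈ Q, ↑(H a) ⊆ G.edgeSet := fun a ha => ((hH a ha).1).1
  -- the multilevel spanner property
  have hML : IsMLSpanner G w t ℓ T Ee := by
    constructor
    · intro i hi
      obtain ⟨hi1, hiℓ⟩ := Finset.mem_Icc.mp hi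
      obtain ⟨hkQ, hki⟩ := hκ i hi1
      obtain ⟨hk1, hkℓ⟩ := hQmem _ hkQ
      have hTsub : T i ⊆ T (κ i) :=
        hT (κ i) (Finset.mem_Icc.mpr ⟨hk1, le_trans hki hiℓ⟩) i hi hki
      have hHk : H (κ i) ⊆ Ee i := by
        intro e he
        exact (hmem i hi e).mpr ⟨κ i, hkQ, le_refl _, he⟩
      obtain ⟨⟨hsub, hspan⟩, _⟩ := hH (κ i) hkQ
      constructor
      · intro e he
        obtain ⟨a, haQ, _, hea⟩ := (hmem i hi e).mp he
        exact hHsub a haQ hea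
      · intro u hu v hv
        obtain ⟨p, hp1, hp2⟩ := hspan u (hTsub hu) v (hTsub hv)
        exact ⟨p, fun e he => hHk (hp1 e he), hp2⟩
    · intro i hi j hj hij
      rw [hEe i hi, hEe j hj]
      apply Finset.biUnion_subset_biUnion_of_subset_left
      intro a ha
      obtain ⟨haQ, hka⟩ := Finset.mem_filter.mp ha
      exact Finset.mem_filter.mpr ⟨haQ, le_trans (hκmono i j hij) hka⟩
  refine ⟨hML, ?_⟩
  -- cost bound
  have h1ℓ : (1 : ℕ) ∈ Finset.Icc 1 ℓ := Finset.mem_Icc.mpr ⟨le_refl _, hℓ⟩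
  -- the top level a_e
  set ae : Sym2 V → ℕ := fun e => (Q.filter (fun a => e ∈ H a)).sup id with haedef
  have hae : ∀ e ∈ Ee 1, ae e ∈ Q ∧ e ∈ H (ae e) ∧ ∀ a ∈ Q, e ∈ H a → a ≤ ae e := by
    intro e he
    obtain ⟨a, haQ, _, hea⟩ := (hmem 1 h1ℓ e).mp he
    have hne : (Q.filter (fun a => e ∈ H a)).Nonempty :=
      ⟨a, Finset.mem_filter.mpr ⟨haQ, hea⟩⟩
    obtain ⟨b, hb, hbe⟩ := Finset.exists_mem_eq_sup _ hne id
    obtain ⟨hbQ, hbe'⟩ := Finset.mem_filter.mp hb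
    refine ⟨?_, ?_, ?_⟩
    · show (Q.filter (fun a => e ∈ H a)).sup id ∈ Q
      rw [hbe]; exact hbQ
    · show e ∈ H ((Q.filter (fun a => e ∈ H a)).sup id)
      rw [hbe]; exact hbe'
    · intro c hcQ hc
      exact Finset.le_sup (f := id) (Finset.mem_filter.mpr ⟨hcQ, hc⟩)
  -- y(e) = succQ (ae e) - 1
  have hy : ∀ e ∈ Ee 1,
      ((Finset.Icc 1 ℓ).filter (fun i => e ∈ Ee i)).sup id = succQ (ae e) - 1 := by
    intro e he
    obtain ⟨haQ, haH, hamax⟩ := hae e he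
    obtain ⟨ha1, haℓ⟩ := hQmem _ haQ
    obtain ⟨hlt, hle, hsuccmin, _⟩ := hsucc _ haQ
    have haesub : ae e ≤ succQ (ae e) - 1 := Nat.le_sub_one_of_lt hlt
    have hsℓ : succQ (ae e) - 1 ≤ ℓ := by omega
    apply le_antisymm
    · apply Finset.sup_le
      intro i hi
      obtain ⟨hiI, hiE⟩ := Finset.mem_filter.mp hi
      obtain ⟨hi1, hiℓ⟩ := Finset.mem_Icc.mp hiI
      obtain ⟨a, haQ', hka, hea⟩ := (hmem i hiI e).mp hiE
      have haae : a ≤ ae e := hamax a haQ' hea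
      show i ≤ succQ (ae e) - 1
      -- show i ≤ succQ (ae e) - 1, i.e. i < succQ (ae e)
      by_contra hcon
      push_neg at hcon
      have hsi : succQ (ae e) ≤ i := by omega
      obtain ⟨_, _, _, hQor⟩ := hsucc _ haQ
      rcases hQor with h | h
      · omega
      · have := hκge _ h i hsi
        have := le_trans this hka
        have := le_trans this haae
        omega
    · have hmem' : succQ (ae e) - 1 ∈
          (Finset.Icc 1 ℓ).filter (fun i => e ∈ Ee i) := by
        refine Finset.mem_filter.mpr ⟨Finset.mem_Icc.mpr ⟨by omega, hsℓ⟩, ?_⟩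
        refine (hmem _ (Finset.mem_Icc.mpr ⟨by omega, hsℓ⟩) e).mpr ⟨ae e, haQ, ?_, haH⟩
        -- κ (succQ (ae e) - 1) ≤ ae e
        by_contra hcon
        push_neg at hcon
        obtain ⟨hkQ, hki⟩ := hκ (succQ (ae e) - 1) (by omega)
        have := hsuccmin _ hkQ hcon
        omega
      exact Finset.le_sup (f := id) hmem'
  -- rewrite the cost
  have hcost : mlCost w g ℓ Ee = ∑ e ∈ Ee 1, g (succQ (ae e) - 1) * w e := by
    unfold mlCost
    exact Finset.sum_congr rfl (fun e he => by rw [hy e he])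
  rw [hcost]
  rw [← Finset.sum_fiberwise_of_maps_to (g := ae) (t := Q)
    (fun e he => (hae e he).1) (fun e => g (succQ (ae e) - 1) * w e)]
  apply Finset.sum_le_sum
  intro a haQ
  obtain ⟨ha1, haℓ⟩ := hQmem _ haQ
  obtain ⟨hlt, hle, _, _⟩ := hsucc _ haQ
  have hg_nonneg : 0 ≤ g (succQ a - 1) :=
    le_of_lt (hg0 _ (Finset.mem_Icc.mpr ⟨by omega, by omega⟩))
  have hsubHa : (Ee 1).filter (fun e => ae e = a) ⊆ H a := by
    intro e he
    obtain ⟨heE, hea⟩ := Finset.mem_filter.mp he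
    have := (hae e heE).2.1
    rwa [hea] at this
  calc ∑ e ∈ (Ee 1).filter (fun e => ae e = a), g (succQ (ae e) - 1) * w e
      = ∑ e ∈ (Ee 1).filter (fun e => ae e = a), g (succQ a - 1) * w e := by
        apply Finset.sum_congr rfl
        intro e he
        rw [(Finset.mem_filter.mp he).2]
    _ ≤ ∑ e ∈ H a, g (succQ a - 1) * w e := by
        apply Finset.sum_le_sum_of_subset_of_nonneg hsubHa
        intro e heH _
        exact mul_nonneg hg_nonneg (le_of_lt (hw e (hHsub a haQ heH)))
    _ = g (succQ a - 1) * setWeight w (H a) := by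
        rw [setWeight, Finset.mul_sum]
    _ = g (succQ a - 1) * optT G w t ↑(T a) := by rw [(hH a haQ).2]
end

section
/- Let G = (V, E) be a finite, undirected, connected simple graph with positive edge weights, let t ≥ 1, let ℓ = 2^m be a power of two, and let T_ℓ ⊆ … ⊆ T_1 ⊆ V be nested terminal sets. Take the linear level-cost function g(i) = i, the rounding set Q = {2^0, 2^1, …, 2^m}, and q(i) = 2^{⌈log₂ i⌉}. For each k ∈ {0, 1, …, m} let H_k ⊆ E be a minimum-weight subsetwise t-spanner of G over T_{min{ i : q(i) = 2^k }} (which equals T_1 for k = 0 and T_{2^{k−1}+1} for k ≥ 1). Define E_i := ⋃_{k : 2^k ≥ q(i)} H_k for i = 1,…,ℓ. Then E_ℓ ⊆ … ⊆ E_1, each E_i is a subsetwise t-spanner of G over T_i, and the cost Σ_{e ∈ E_1} y(e)·w(e), where y(e) = max{ i : e ∈ E_i }, is at most 4·OPT_ML. -/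
open SimpleGraph Finset

variable {V : Type*}

/-!
Let `F` be any multi-level spanner with levels `y_F(e)`. The levels `i` rounded up to `2^k`
start at `levelStart k`, and `F (levelStart k)` spans the terminals of `H k`, so by minimality
`∑ₖ 2^k W(H k) ≤ ∑ₖ 2^k W(F (levelStart k)) ≤ ∑ₑ w(e) ∑_{k : levelStart k ≤ y_F(e)} 2^k`,
and the inner geometric sum is below `2^(⌈log₂ y_F(e)⌉ + 1) ≤ 4 y_F(e)`. Conversely an edge
of the rounded solution lies in some `H k` and only in levels `i ≤ 2^k`, so its level is at
most `∑_{k : e ∈ H k} 2^k`; hence the rounded cost is at most `∑ₖ 2^k W(H k)`.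
-/

/-- The first level `i` with `2^⌈log₂ i⌉ = 2^k`. -/
def levelStart (k : ℕ) : ℕ := if k = 0 then 1 else 2 ^ (k - 1) + 1

lemma one_le_levelStart (k : ℕ) : 1 ≤ levelStart k := by
  unfold levelStart
  split_ifs <;> simp

lemma levelStart_le_iff {i k : ℕ} (hi : 1 ≤ i) : levelStart k ≤ i ↔ k ≤ Nat.clog 2 i := by
  unfold levelStart
  split_ifs with hk
  · simp [hk, hi]
  · rw [Nat.add_one_le_iff, ← Nat.lt_clog_iff_pow_lt one_lt_two]
    omega

lemma one_mem_Icc_two_pow (m : ℕ) : 1 ∈ Icc 1 (2 ^ m) :=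
  mem_Icc.2 ⟨le_rfl, Nat.one_le_two_pow⟩

lemma levelStart_mem_Icc {k m : ℕ} (hk : k ∈ range (m + 1)) : levelStart k ∈ Icc 1 (2 ^ m) := by
  refine mem_Icc.2 ⟨one_le_levelStart k, ?_⟩
  rw [levelStart_le_iff Nat.one_le_two_pow, Nat.clog_pow 2 m one_lt_two]
  exact Nat.lt_succ_iff.1 (mem_range.1 hk)

lemma two_pow_clog_le_two_mul {y : ℕ} (hy : 1 ≤ y) : 2 ^ Nat.clog 2 y ≤ 2 * y := by
  rcases Nat.eq_zero_or_pos (Nat.clog 2 y) with h | h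
  · rw [h]
    omega
  · have hlt : 2 ^ (Nat.clog 2 y - 1) < y := Nat.pow_lt_of_lt_clog (Nat.sub_one_lt_of_lt h)
    rw [← Nat.sub_one_add_one h.ne', pow_succ]
    omega

lemma sum_two_pow_le_four_mul {S : Finset ℕ} {y : ℕ} (hy : 1 ≤ y)
    (hS : ∀ k ∈ S, levelStart k ≤ y) : ∑ k ∈ S, 2 ^ k ≤ 4 * y := by
  have hlt : ∑ k ∈ S, 2 ^ k < 2 ^ (Nat.clog 2 y + 1) :=
    Nat.geomSum_lt le_rfl fun k hk => Nat.lt_succ_of_le ((levelStart_le_iff hy).1 (hS k hk))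
  have := two_pow_clog_le_two_mul hy
  rw [pow_succ] at hlt
  omega

lemma IsSpanner.mono {G : SimpleGraph V} {w : Sym2 V → ℝ} {T T' : Set V} {f : ℝ → ℝ}
    {E' E'' : Finset (Sym2 V)} (h : IsSpanner G w T f E') (hT : T' ⊆ T) (hE : E' ⊆ E'')
    (hE'' : ↑E'' ⊆ G.edgeSet) : IsSpanner G w T' f E'' := by
  refine ⟨hE'', fun u hu v hv => ?_⟩
  obtain ⟨p, hp, hpw⟩ := h.2 u (hT hu) v (hT hv)
  exact ⟨p, fun e he => hE (hp e he), hpw⟩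

lemma optT_le_setWeight {G : SimpleGraph V} {w : Sym2 V → ℝ} {t : ℝ} {T : Set V}
    {E' : Finset (Sym2 V)} (hw : ∀ e ∈ G.edgeSet, 0 ≤ w e) (h : IsSpannerMul G w T t E') :
    optT G w t T ≤ setWeight w E' := by
  refine csInf_le ⟨0, ?_⟩ ⟨E', h, rfl⟩
  rintro _ ⟨E'', hE'', rfl⟩
  exact sum_nonneg fun e he => hw e (hE''.1 he)

section Levels

variable [DecidableEq V]

lemma sum_mul_setWeight_eq_sum (w : Sym2 V → ℝ) (c : ℕ → ℝ) {K : Finset ℕ}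
    {A : Finset (Sym2 V)} {B : ℕ → Finset (Sym2 V)} (hB : ∀ k ∈ K, B k ⊆ A) :
    ∑ k ∈ K, c k * setWeight w (B k) = ∑ e ∈ A, (∑ k ∈ K with e ∈ B k, c k) * w e := by
  simp only [setWeight, mul_sum, sum_mul]
  exact sum_comm' fun k e =>
    ⟨fun h => ⟨mem_filter.2 h, hB k h.1 h.2⟩, fun h => mem_filter.1 h.1⟩

/-- `y(e)`; it is `0` when `e` lies in no level. -/
def topLevel (ℓ : ℕ) (F : ℕ → Finset (Sym2 V)) (e : Sym2 V) : ℕ :=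
  ((Icc 1 ℓ).filter (fun i => e ∈ F i)).sup id

lemma mlCost_eq_sum_topLevel (w : Sym2 V → ℝ) (g : ℕ → ℝ) (ℓ : ℕ) (F : ℕ → Finset (Sym2 V)) :
    mlCost w g ℓ F = ∑ e ∈ F 1, g (topLevel ℓ F e) * w e :=
  rfl

variable {ℓ : ℕ} {F : ℕ → Finset (Sym2 V)} {e : Sym2 V}

lemma le_topLevel {i : ℕ} (hi : i ∈ Icc 1 ℓ) (he : e ∈ F i) : i ≤ topLevel ℓ F e :=
  le_sup (f := id) (mem_filter.2 ⟨hi, he⟩)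

lemma topLevel_le {n : ℕ} (h : ∀ i ∈ Icc 1 ℓ, e ∈ F i → i ≤ n) : topLevel ℓ F e ≤ n :=
  Finset.sup_le fun i hi => h i (mem_filter.1 hi).1 (mem_filter.1 hi).2

lemma sum_two_pow_mul_setWeight_le_four_mul_mlCost {w : Sym2 V → ℝ} {m : ℕ}
    (hw : ∀ e ∈ F 1, 0 ≤ w e) (hF : ∀ i ∈ Icc 1 (2 ^ m), F i ⊆ F 1) :
    ∑ k ∈ range (m + 1), 2 ^ k * setWeight w (F (levelStart k))
      ≤ 4 * mlCost w (fun n => (n : ℝ)) (2 ^ m) F := by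
  rw [sum_mul_setWeight_eq_sum w _ fun k hk => hF _ (levelStart_mem_Icc hk),
    mlCost_eq_sum_topLevel, mul_sum]
  refine sum_le_sum fun e he => ?_
  rw [← mul_assoc]
  refine mul_le_mul_of_nonneg_right ?_ (hw e he)
  have hsum : ∑ k ∈ range (m + 1) with e ∈ F (levelStart k), 2 ^ k ≤ 4 * topLevel (2 ^ m) F e :=
    sum_two_pow_le_four_mul (le_topLevel (one_mem_Icc_two_pow m) he) fun k hk =>
      le_topLevel (levelStart_mem_Icc (mem_filter.1 hk).1) (mem_filter.1 hk).2
  exact_mod_cast hsum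

end Levels

section Rounding

def IsRoundedUnion (m : ℕ) (H Ee : ℕ → Finset (Sym2 V)) : Prop :=
  ∀ i ∈ Icc 1 (2 ^ m), ∀ e, e ∈ Ee i ↔ ∃ k ∈ range (m + 1), Nat.clog 2 i ≤ k ∧ e ∈ H k

variable {G : SimpleGraph V} {w : Sym2 V → ℝ} {t : ℝ} {m : ℕ} {T : ℕ → Finset V}
  {H Ee : ℕ → Finset (Sym2 V)}

lemma isRoundedUnion_of_eq_biUnion [DecidableEq V] (hEe : ∀ i ∈ Icc 1 (2 ^ m),
      Ee i = ((range (m + 1)).filter (fun k => 2 ^ Nat.clog 2 i ≤ 2 ^ k)).biUnion H) :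
    IsRoundedUnion m H Ee := fun i hi e => by
  simp only [hEe i hi, mem_biUnion, mem_filter, Nat.pow_le_pow_iff_right one_lt_two, and_assoc]

lemma IsRoundedUnion.subset_edgeSet (hEe : IsRoundedUnion m H Ee)
    (hH : ∀ k ∈ range (m + 1), ↑(H k) ⊆ G.edgeSet) {i : ℕ} (hi : i ∈ Icc 1 (2 ^ m)) :
    ↑(Ee i) ⊆ G.edgeSet := fun e he => by
  obtain ⟨k, hk, -, heH⟩ := (hEe i hi e).1 he
  exact hH k hk heH

lemma IsRoundedUnion.antitone (hEe : IsRoundedUnion m H Ee) {i j : ℕ}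
    (hi : i ∈ Icc 1 (2 ^ m)) (hj : j ∈ Icc 1 (2 ^ m)) (hij : i ≤ j) : Ee j ⊆ Ee i := fun e he => by
  obtain ⟨k, hk, hjk, heH⟩ := (hEe j hj e).1 he
  exact (hEe i hi e).2 ⟨k, hk, (Nat.clog_mono_right 2 hij).trans hjk, heH⟩

lemma IsRoundedUnion.isMLSpanner (hEe : IsRoundedUnion m H Ee)
    (hT : ∀ i ∈ Icc 1 (2 ^ m), ∀ j ∈ Icc 1 (2 ^ m), i ≤ j → T j ⊆ T i)
    (hH : ∀ k ∈ range (m + 1), IsSpannerMul G w ↑(T (levelStart k)) t (H k)) :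
    IsMLSpanner G w t (2 ^ m) T Ee := by
  refine ⟨fun i hi => ?_, fun i hi j hj hij => hEe.antitone hi hj hij⟩
  have hi1 : 1 ≤ i := (mem_Icc.1 hi).1
  have hk : Nat.clog 2 i ∈ range (m + 1) :=
    mem_range.2 (Nat.lt_succ_of_le (Nat.clog_le_of_le_pow (mem_Icc.1 hi).2))
  have hstart : levelStart (Nat.clog 2 i) ≤ i := (levelStart_le_iff hi1).2 le_rfl
  exact (hH _ hk).mono (coe_subset.2 (hT _ (levelStart_mem_Icc hk) i hi hstart))
    (fun e he => (hEe i hi e).2 ⟨_, hk, le_rfl, he⟩)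
    (hEe.subset_edgeSet (fun k hk => (hH k hk).1) hi)

lemma IsRoundedUnion.topLevel_le_sum [DecidableEq V] (hEe : IsRoundedUnion m H Ee)
    (e : Sym2 V) : topLevel (2 ^ m) Ee e ≤ ∑ k ∈ range (m + 1) with e ∈ H k, 2 ^ k :=
  topLevel_le fun i hi he => by
    obtain ⟨k, hk, hik, heH⟩ := (hEe i hi e).1 he
    calc i ≤ 2 ^ Nat.clog 2 i := Nat.le_pow_clog one_lt_two i
      _ ≤ 2 ^ k := Nat.pow_le_pow_right two_pos hik
      _ ≤ _ := single_le_sum (fun _ _ => Nat.zero_le _) (mem_filter.2 ⟨hk, heH⟩)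

lemma IsRoundedUnion.mlCost_le [DecidableEq V] (hEe : IsRoundedUnion m H Ee)
    (hw : ∀ e ∈ Ee 1, 0 ≤ w e) :
    mlCost w (fun n => (n : ℝ)) (2 ^ m) Ee ≤ ∑ k ∈ range (m + 1), 2 ^ k * setWeight w (H k) := by
  have hH1 : ∀ k ∈ range (m + 1), H k ⊆ Ee 1 := fun k hk e he =>
    (hEe 1 (one_mem_Icc_two_pow m) e).2 ⟨k, hk, by simp [Nat.clog_one_right], he⟩
  rw [sum_mul_setWeight_eq_sum w _ hH1, mlCost_eq_sum_topLevel]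
  refine sum_le_sum fun e he => mul_le_mul_of_nonneg_right ?_ (hw e he)
  exact_mod_cast hEe.topLevel_le_sum e

end Rounding

theorem stmt10_general {V : Type*} [DecidableEq V] (G : SimpleGraph V) (w : Sym2 V → ℝ)
    (hw : ∀ e ∈ G.edgeSet, 0 < w e)
    (t : ℝ) (m ℓ : ℕ) (hℓ : ℓ = 2 ^ m)
    (T : ℕ → Finset V)
    (hT : ∀ i ∈ Finset.Icc 1 ℓ, ∀ j ∈ Finset.Icc 1 ℓ, i ≤ j → T j ⊆ T i)
    (H : ℕ → Finset (Sym2 V))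
    (hH : ∀ k ∈ Finset.range (m + 1),
      IsSpannerMul G w ↑(if k = 0 then T 1 else T (2 ^ (k - 1) + 1)) t (H k) ∧
      setWeight w (H k) = optT G w t ↑(if k = 0 then T 1 else T (2 ^ (k - 1) + 1)))
    (Ee : ℕ → Finset (Sym2 V))
    (hEe : ∀ i ∈ Finset.Icc 1 ℓ,
      Ee i = ((Finset.range (m + 1)).filter
        (fun k => 2 ^ Nat.clog 2 i ≤ 2 ^ k)).biUnion H) :
    IsMLSpanner G w t ℓ T Ee ∧
    mlCost w (fun n => (n : ℝ)) ℓ Ee ≤ 4 * optML G w t (fun n => (n : ℝ)) ℓ T := by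
  subst hℓ
  have hw0 : ∀ e ∈ G.edgeSet, 0 ≤ w e := fun e he => (hw e he).le
  have hH' : ∀ k ∈ range (m + 1), IsSpannerMul G w ↑(T (levelStart k)) t (H k) ∧
      setWeight w (H k) = optT G w t ↑(T (levelStart k)) := by
    simpa only [levelStart, apply_ite T] using hH
  have hrounded := isRoundedUnion_of_eq_biUnion hEe
  have hEeML : IsMLSpanner G w t (2 ^ m) T Ee :=
    hrounded.isMLSpanner hT fun k hk => (hH' k hk).1
  have h1 := one_mem_Icc_two_pow m
  have hcompare : ∀ F, IsMLSpanner G w t (2 ^ m) T F →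
      mlCost w (fun n => (n : ℝ)) (2 ^ m) Ee ≤ 4 * mlCost w (fun n => (n : ℝ)) (2 ^ m) F :=
    fun F hF => calc
      _ ≤ ∑ k ∈ range (m + 1), 2 ^ k * setWeight w (H k) :=
        hrounded.mlCost_le fun e he => hw0 e ((hEeML.1 1 h1).1 he)
      _ ≤ ∑ k ∈ range (m + 1), 2 ^ k * setWeight w (F (levelStart k)) := by
        gcongr with k hk
        rw [(hH' k hk).2]
        exact optT_le_setWeight hw0 (hF.1 _ (levelStart_mem_Icc hk))
      _ ≤ _ := sum_two_pow_mul_setWeight_le_four_mul_mlCost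
        (fun e he => hw0 e ((hF.1 1 h1).1 he))
        (fun i hi => hF.2 1 h1 i hi (mem_Icc.1 hi).1)
  refine ⟨hEeML, ?_⟩
  have hquarter : mlCost w (fun n => (n : ℝ)) (2 ^ m) Ee / 4 ≤
      optML G w t (fun n => (n : ℝ)) (2 ^ m) T := by
    refine le_csInf ⟨_, Ee, hEeML, rfl⟩ ?_
    rintro _ ⟨F, hF, rfl⟩
    linarith [hcompare F hF]
  linarith

/-- oracle rounding with powers of two: `4`-approximation.  Let `ℓ = 2^m`,
use linear level costs `g(i) = i`, rounding set `Q = {2^0, …, 2^m}`, and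
`q(i) = 2^⌈log₂ i⌉`.  For each `k ≤ m` let `H k` be a minimum-weight subsetwise `t`-spanner
of `G` over `T (min{i : q i = 2^k})` (which is `T 1` for `k = 0` and `T (2^(k-1)+1)` for
`k ≥ 1`), and set `Ee i = ⋃_{k : 2^k ≥ q i} H k`.  Then `Ee` is a nested multi-level
subsetwise `t`-spanner of cost at most `4·OPT_ML`. -/
theorem stmt10 {V : Type*} [Fintype V] [DecidableEq V] (G : SimpleGraph V) (w : Sym2 V → ℝ)
    (hG : G.Connected) (hw : ∀ e ∈ G.edgeSet, 0 < w e)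
    (t : ℝ) (ht : 1 ≤ t) (m ℓ : ℕ) (hℓ : ℓ = 2 ^ m)
    (T : ℕ → Finset V)
    (hT : ∀ i ∈ Finset.Icc 1 ℓ, ∀ j ∈ Finset.Icc 1 ℓ, i ≤ j → T j ⊆ T i)
    (H : ℕ → Finset (Sym2 V))
    (hH : ∀ k ∈ Finset.range (m + 1),
      IsSpannerMul G w ↑(if k = 0 then T 1 else T (2 ^ (k - 1) + 1)) t (H k) ∧
      setWeight w (H k) = optT G w t ↑(if k = 0 then T 1 else T (2 ^ (k - 1) + 1)))
    (Ee : ℕ → Finset (Sym2 V))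
    (hEe : ∀ i ∈ Finset.Icc 1 ℓ,
      Ee i = ((Finset.range (m + 1)).filter
        (fun k => 2 ^ Nat.clog 2 i ≤ 2 ^ k)).biUnion H) :
    IsMLSpanner G w t ℓ T Ee ∧
    mlCost w (fun n => (n : ℝ)) ℓ Ee ≤ 4 * optML G w t (fun n => (n : ℝ)) ℓ T :=
  stmt10_general G w hw t m ℓ hℓ T hT H hH Ee hEe
end
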